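/- arXiv:1510.02151 — 2 statements merged into one kernel-verified Lean document; each statement's English description precedes it below -/
import Mathlib

section
/- Let M(t) = a + b(t + c)^p with a, c > 0, b > 0, p < 0 (so M is positive and decreasing). Then there exist ρ ∈ (0, 4/π²) and b > 0, p < 0 such that M(π/2) ≤ 2ρ·M(ρ²π³/3), i.e., the comparison inequality −M(‖u‖²)u'' ≤ −M(‖v‖²)v'' holds on (0,π) for u = sin(x), v = ρx(π−x), while u ≰ v. -/
open Real Set

set_option maxHeartbeats 1600000 in
theorem decreasing_counterexample (a c : ℝ) (ha : 0 < a) (hc : 0 < c) :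
    ∃ ρ b p : ℝ, 0 < ρ ∧ ρ < 4 / π ^ 2 ∧ 0 < b ∧ p < 0 ∧
      (a + b * (π / 2 + c) ^ p ≤
          2 * ρ * (a + b * (ρ ^ 2 * π ^ 3 / 3 + c) ^ p)) ∧
      (∀ x ∈ Ioo (0 : ℝ) π,
          -((a + b * (π / 2 + c) ^ p) * deriv (deriv Real.sin) x) ≤
            -((a + b * (ρ ^ 2 * π ^ 3 / 3 + c) ^ p) *
                deriv (deriv (fun y : ℝ => ρ * (y * (π - y)))) x)) ∧
      ¬ (∀ x ∈ Ioo (0 : ℝ) π, Real.sin x ≤ ρ * (x * (π - x))) := by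
  have hpi : (3 : ℝ) < π := Real.pi_gt_three
  have hpi0 : (0 : ℝ) < π := by linarith
  set ρ : ℝ := 1 / π ^ 2 with hρdef
  have hρ0 : 0 < ρ := by positivity
  set S : ℝ := ρ ^ 2 * π ^ 3 / 3 + c with hSdef
  set T : ℝ := π / 2 + c with hTdef
  have hS0 : 0 < S := by positivity
  have hST : S < T := by
    have h1 : ρ ^ 2 * π ^ 3 / 3 = 1 / (3 * π) := by
      rw [hρdef]; field_simp
    have h2 : 1 / (3 * π) < π / 2 := by
      rw [div_lt_div_iff₀ (by positivity) (by norm_num)]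
      nlinarith
    simp only [hSdef, hTdef]; linarith
  have hT0 : 0 < T := lt_trans hS0 hST
  set r : ℝ := T / S with hrdef
  have hr1 : (1 : ℝ) < r := (one_lt_div hS0).mpr hST
  have hr0 : (0 : ℝ) < r := by linarith
  have hlogr : 0 < Real.log r := Real.log_pos hr1
  set p : ℝ := -(Real.log (π ^ 2 / 2) / Real.log r + 1) with hpdef
  have hlogpi : 0 < Real.log (π ^ 2 / 2) := Real.log_pos (by nlinarith)
  have hp0 : p < 0 := by
    rw [hpdef]
    have : 0 < Real.log (π ^ 2 / 2) / Real.log r + 1 := by positivity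
    linarith
  have hkey : r ^ p < 2 * ρ := by
    have h2ρ : 2 * ρ = (π ^ 2 / 2)⁻¹ := by
      rw [hρdef]; field_simp
    have hnegp : π ^ 2 / 2 < r ^ (-p) := by
      have h1 : (-p) * Real.log r = Real.log (π ^ 2 / 2) + Real.log r := by
        rw [hpdef]; field_simp
      rw [Real.rpow_def_of_pos hr0, mul_comm, h1]
      calc π ^ 2 / 2 = Real.exp (Real.log (π ^ 2 / 2)) := by
            rw [Real.exp_log (by positivity)]
        _ < Real.exp (Real.log (π ^ 2 / 2) + Real.log r) := by
            apply Real.exp_lt_exp.mpr; linarith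
    have hrp : r ^ p = (r ^ (-p))⁻¹ := by
      rw [← Real.rpow_neg hr0.le, neg_neg]
    rw [hrp, h2ρ]
    exact inv_strictAnti₀ (by positivity) hnegp
  have hTp : T ^ p = S ^ p * r ^ p := by
    rw [← Real.mul_rpow hS0.le (by positivity)]
    congr 1
    rw [hrdef, mul_div_cancel₀ _ (ne_of_gt hS0)]
  have hSp0 : 0 < S ^ p := Real.rpow_pos_of_pos hS0 p
  have hTp0 : 0 < T ^ p := Real.rpow_pos_of_pos hT0 p
  have hD0 : 0 < 2 * ρ * S ^ p - T ^ p := by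
    rw [hTp]; nlinarith
  have h2ρlt1 : 2 * ρ < 1 := by
    have hx : 2 * ρ * π ^ 2 = 2 := by rw [hρdef]; field_simp
    nlinarith
  set b : ℝ := a * (1 - 2 * ρ) / (2 * ρ * S ^ p - T ^ p) with hbdef
  have hb0 : 0 < b := by
    apply div_pos _ hD0
    nlinarith
  have hbD : b * (2 * ρ * S ^ p - T ^ p) = a * (1 - 2 * ρ) := by
    rw [hbdef, div_mul_cancel₀ _ (ne_of_gt hD0)]
  clear_value b p r T S ρ
  have hmain : a + b * T ^ p ≤ 2 * ρ * (a + b * S ^ p) := by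
    nlinarith [hbD]
  refine ⟨ρ, b, p, hρ0, ?_, hb0, hp0, ?_, ?_, ?_⟩
  · rw [hρdef, div_lt_div_iff₀ (by positivity) (by positivity)]
    nlinarith
  · rw [← hSdef]; exact hmain
  · intro x hx
    rw [← hSdef]
    have hd1 : deriv (deriv Real.sin) x = -Real.sin x := by
      rw [Real.deriv_sin, Real.deriv_cos']
    have hvd : deriv (fun y : ℝ => ρ * (y * (π - y))) = fun y => ρ * (π - 2 * y) := by
      funext y
      have h : HasDerivAt (fun y : ℝ => ρ * (y * (π - y)))
          (ρ * (1 * (π - y) + y * (0 - 1))) y :=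
        ((hasDerivAt_id y).mul ((hasDerivAt_const y π).sub (hasDerivAt_id y))).const_mul ρ
      rw [h.deriv]; ring
    have hd2 : deriv (deriv (fun y : ℝ => ρ * (y * (π - y)))) x = -(2 * ρ) := by
      rw [hvd]
      have h : HasDerivAt (fun y : ℝ => ρ * (π - 2 * y)) (ρ * (0 - 2 * 1)) x :=
        (((hasDerivAt_const x π).sub ((hasDerivAt_id x).const_mul 2))).const_mul ρ
      rw [h.deriv]; ring
    rw [hd1, hd2]
    have hM1 : 0 < a + b * T ^ p := add_pos ha (mul_pos hb0 hTp0)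
    have h1 : (a + b * T ^ p) * Real.sin x ≤ a + b * T ^ p := by
      nlinarith [Real.sin_le_one x]
    nlinarith [hmain]
  · intro hall
    have hmem : π / 2 ∈ Ioo (0 : ℝ) π := by
      constructor
      · positivity
      · linarith
    have h := hall (π / 2) hmem
    rw [Real.sin_pi_div_two] at h
    have hval : ρ * (π / 2 * (π - π / 2)) = 1 / 4 := by
      rw [hρdef]; field_simp; ring
    rw [hval] at h
    norm_num at h
end

section
/- There exist a continuous increasing function M : [0,∞) → (0,∞) with M ≥ m₀ > 0 and nonnegative C² functions u̲, ū on [0,π] vanishing at 0 and π, such that −M(‖ū‖²)ū'' ≥ −M(‖u̲‖²)u̲'' on (0,π) but u̲ ≰ ū; i.e., the comparison principle for Kirchhoff operators with increasing M fails. -/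
open Real Set intervalIntegral

/-- Dirichlet energy of a function on `(0, π)`. -/
noncomputable def energy (u : ℝ → ℝ) : ℝ := ∫ x in (0 : ℝ)..π, (deriv u x) ^ 2

/-!
Take `u̲ = sin` and `ū = ρ x (π - x)` with `ρ` slightly below `4 / π²` (here `2 / 5`), so that
`ū (π/2) = ρ π² / 4 < 1 = u̲ (π/2)`; yet `‖ū‖² = ρ² π³ / 3` slightly exceeds `‖u̲‖² = π / 2`.
Then `-M(‖u̲‖²) u̲'' = M(π/2) sin ≤ M(π/2)` while `-M(‖ū‖²) ū'' = 2ρ M(ρ² π³ / 3)`, and an `M` growing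
fast enough (here `1 + t²⁰`) amplifies the small gap between the two energies until
`M(π/2) ≤ 2ρ M(ρ² π³ / 3)`.
-/

section Parabola

variable (ρ : ℝ)

noncomputable def parabola (x : ℝ) : ℝ := ρ * x * (π - x)

lemma hasDerivAt_parabola (x : ℝ) : HasDerivAt (parabola ρ) (ρ * (π - 2 * x)) x := by
  have := ((hasDerivAt_id' x).const_mul ρ).fun_mul
    ((hasDerivAt_const x π).fun_sub (hasDerivAt_id' x))
  exact this.congr_deriv (by ring)

lemma deriv_parabola : deriv (parabola ρ) = fun x => ρ * (π - 2 * x) :=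
  funext fun x => (hasDerivAt_parabola ρ x).deriv

lemma deriv_deriv_parabola (x : ℝ) : deriv (deriv (parabola ρ)) x = -(2 * ρ) := by
  rw [deriv_parabola]
  have := ((hasDerivAt_const x π).fun_sub ((hasDerivAt_id' x).const_mul 2)).const_mul ρ
  exact this.deriv.trans (by ring)

lemma contDiff_parabola : ContDiff ℝ 2 (parabola ρ) := by
  unfold parabola; fun_prop

lemma parabola_nonneg {ρ : ℝ} (hρ : 0 ≤ ρ) {x : ℝ} (hx : x ∈ Icc 0 π) : 0 ≤ parabola ρ x :=
  mul_nonneg (mul_nonneg hρ hx.1) (sub_nonneg.2 hx.2)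

@[simp] lemma parabola_zero : parabola ρ 0 = 0 := by simp [parabola]

@[simp] lemma parabola_pi : parabola ρ π = 0 := by simp [parabola]

lemma parabola_pi_div_two : parabola ρ (π / 2) = ρ * π ^ 2 / 4 := by
  unfold parabola; ring

lemma energy_parabola : energy (parabola ρ) = ρ ^ 2 * π ^ 3 / 3 := by
  have antideriv (x : ℝ) :
      HasDerivAt (fun x => -(ρ ^ 2 / 6) * (π - 2 * x) ^ 3) ((ρ * (π - 2 * x)) ^ 2) x := by
    have := (((hasDerivAt_const x π).fun_sub ((hasDerivAt_id' x).const_mul 2)).fun_pow 3)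
      |>.const_mul (-(ρ ^ 2 / 6))
    exact this.congr_deriv (by push_cast; ring)
  rw [energy, deriv_parabola,
    integral_eq_sub_of_hasDerivAt (fun x _ => antideriv x)
      (Continuous.intervalIntegrable (by fun_prop) _ _)]
  ring

end Parabola

lemma energy_sin : energy sin = π / 2 := by
  simp [energy, integral_cos_sq]

lemma deriv_deriv_sin (x : ℝ) : deriv (deriv sin) x = -sin x := by
  simp

lemma sin_kirchhoff_le_parabola {M : ℝ → ℝ} {ρ : ℝ} (hM : 0 ≤ M (π / 2))
    (hcomp : M (π / 2) ≤ 2 * ρ * M (ρ ^ 2 * π ^ 3 / 3)) (x : ℝ) :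
    -(M (energy sin) * deriv (deriv sin) x) ≤
      -(M (energy (parabola ρ)) * deriv (deriv (parabola ρ)) x) := by
  rw [energy_sin, energy_parabola, deriv_deriv_sin, deriv_deriv_parabola]
  nlinarith [mul_le_mul_of_nonneg_left (sin_le_one x) hM]

lemma one_add_pow_le_mul_one_add_mul_pow {s c θ : ℝ} {n : ℕ} (hs : 1 ≤ s)
    (hθ : 0 ≤ θ) (h : 2 ≤ θ * c ^ n) : 1 + s ^ n ≤ θ * (1 + (c * s) ^ n) := by
  have hsn : 1 ≤ s ^ n := one_le_pow₀ hs
  calc 1 + s ^ n ≤ 2 * s ^ n := by linarith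
    _ ≤ θ * c ^ n * s ^ n := by gcongr
    _ = θ * (c * s) ^ n := by ring
    _ ≤ θ * (1 + (c * s) ^ n) := by gcongr; linarith

lemma one_add_pow_twenty_comparison :
    1 + (π / 2) ^ 20 ≤ 2 * (2 / 5) * (1 + ((2 / 5) ^ 2 * π ^ 3 / 3) ^ 20) := by
  have hratio : 21 / 20 ≤ 8 * π ^ 2 / 75 := by nlinarith [pi_gt_d6]
  have hgrowth : 2 ≤ 4 / 5 * (8 * π ^ 2 / 75) ^ 20 :=
    calc (2 : ℝ) ≤ 4 / 5 * (21 / 20) ^ 20 := by norm_num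
      _ ≤ 4 / 5 * (8 * π ^ 2 / 75) ^ 20 := by gcongr
  have henergy : (2 / 5) ^ 2 * π ^ 3 / 3 = 8 * π ^ 2 / 75 * (π / 2) := by ring
  rw [henergy]
  convert one_add_pow_le_mul_one_add_mul_pow (s := π / 2) (by linarith [pi_gt_three])
    (by norm_num) hgrowth using 1
  ring

/-- The comparison principle fails for Kirchhoff operators with an increasing `M`. -/
theorem comparison_fails_for_increasing_M :
    ∃ (M : ℝ → ℝ) (m₀ : ℝ) (usub usup : ℝ → ℝ),
      0 < m₀ ∧ Continuous M ∧ StrictMonoOn M (Ici 0) ∧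
      (∀ t ∈ Ici (0 : ℝ), m₀ ≤ M t) ∧
      ContDiffOn ℝ 2 usub (Icc 0 π) ∧ ContDiffOn ℝ 2 usup (Icc 0 π) ∧
      (∀ x ∈ Icc (0 : ℝ) π, 0 ≤ usub x) ∧ (∀ x ∈ Icc (0 : ℝ) π, 0 ≤ usup x) ∧
      usub 0 = 0 ∧ usub π = 0 ∧ usup 0 = 0 ∧ usup π = 0 ∧
      (∀ x ∈ Ioo (0 : ℝ) π,
          -(M (energy usub) * deriv (deriv usub) x) ≤
            -(M (energy usup) * deriv (deriv usup) x)) ∧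
      ¬ (∀ x ∈ Icc (0 : ℝ) π, usub x ≤ usup x) := by
  refine ⟨fun t => 1 + t ^ 20, 1, sin, parabola (2 / 5), one_pos, by fun_prop,
    (pow_left_strictMonoOn₀ (by norm_num)).const_add 1,
    fun t ht => le_add_of_nonneg_right (pow_nonneg ht 20),
    contDiff_sin.contDiffOn, (contDiff_parabola _).contDiffOn,
    fun x hx => sin_nonneg_of_nonneg_of_le_pi hx.1 hx.2, fun x => parabola_nonneg (by norm_num),
    sin_zero, sin_pi, parabola_zero _, parabola_pi _,
    fun x _ => sin_kirchhoff_le_parabola (M := fun t => 1 + t ^ 20) (by positivity)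
      one_add_pow_twenty_comparison x, ?_⟩
  intro h
  have hmid := h (π / 2) ⟨by positivity, by linarith [pi_pos]⟩
  rw [sin_pi_div_two, parabola_pi_div_two] at hmid
  nlinarith [pi_lt_d2, pi_pos]
end
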